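/- If J_W = 0 in the optimality equation of Theorem 1, then the optimal speed v is determined by (M_Hg/(2F))·[n(E_oc − √Δ(v))/(2r) − (D'(v)v² + D(v)v)/(η√Δ(v))] = −C_I where Δ(v) = E_oc² − 4rD(v)v/(ηn); moreover the left-hand side is strictly decreasing in v on any interval of v > v_mp (the minimum-power speed) where Δ(v) > 0; hence the suboptimal solution, if it exists on that interval, is unique. -/

import Mathlib

set_option maxHeartbeats 2000000 in
/-- Suboptimal solution (`J_W = 0`): the optimal speed solves `G(v) = −C_I` where
`G(v) = (M_H g/(2F)) [n(E_oc − √Δ(v))/(2r) − (D'(v)v² + D(v)v)/(η √Δ(v))]`.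
Moreover `G` is strictly decreasing on `{v > v_mp : Δ(v) > 0}`, hence the
suboptimal solution on that set, if it exists, is unique. -/
theorem suboptimal_unique
    (n MH g Eoc r F η CI Cd K ρ S W : ℝ)
    (hn : 0 < n) (hMH : 0 < MH) (hg : 0 < g) (hE : 0 < Eoc) (hr : 0 < r)
    (hF : 0 < F) (hη : 0 < η) (hCI : 0 < CI)
    (hCd : 0 < Cd) (hK : 0 < K) (hρ : 0 < ρ) (hS : 0 < S) (hW : 0 < W) :
    let D : ℝ → ℝ := fun v => (1/2) * Cd * ρ * S * v ^ 2 + 2 * K * W ^ 2 / (ρ * S * v ^ 2)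
    let Δ : ℝ → ℝ := fun v => Eoc ^ 2 - 4 * r * D v * v / (η * n)
    let G : ℝ → ℝ := fun v => (MH * g / (2 * F)) *
      (n * (Eoc - Real.sqrt (Δ v)) / (2 * r)
        - (deriv D v * v ^ 2 + D v * v) / (η * Real.sqrt (Δ v)))
    let vmp : ℝ := (4 * K * W ^ 2 / (3 * Cd * ρ ^ 2 * S ^ 2)) ^ ((1 : ℝ)/4)
    let s : Set ℝ := {v | vmp < v ∧ 0 < Δ v}
    StrictAntiOn G s ∧
    ∀ v₁ ∈ s, ∀ v₂ ∈ s, G v₁ = -CI → G v₂ = -CI → v₁ = v₂ := by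
  intro D Δ G vmp s
  have hvmp : 0 < vmp := Real.rpow_pos_of_pos (by positivity) _
  have hv4 : vmp ^ (4 : ℕ) = 4 * K * W ^ 2 / (3 * Cd * ρ ^ 2 * S ^ 2) := by
    have h0 : (0:ℝ) ≤ 4 * K * W ^ 2 / (3 * Cd * ρ ^ 2 * S ^ 2) := by positivity
    show ((4 * K * W ^ 2 / (3 * Cd * ρ ^ 2 * S ^ 2)) ^ ((1 : ℝ)/4)) ^ (4:ℕ) = _
    rw [← Real.rpow_natCast (((4 * K * W ^ 2 / (3 * Cd * ρ ^ 2 * S ^ 2)) ^ ((1 : ℝ)/4))) 4,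
      ← Real.rpow_mul h0]
    norm_num
  -- derivative of D
  have hD' : ∀ v : ℝ, 0 < v →
      HasDerivAt D (Cd * ρ * S * v - 4 * K * W ^ 2 / (ρ * S * v ^ 3)) v := by
    intro v hv
    have hv0 : v ≠ 0 := ne_of_gt hv
    have hden : HasDerivAt (fun v : ℝ => ρ * S * v ^ 2) (ρ * S * (2 * v)) v := by
      simpa using (hasDerivAt_pow 2 v).const_mul (ρ * S)
    have hd2 : HasDerivAt (fun v : ℝ => 2 * K * W ^ 2 / (ρ * S * v ^ 2))
        ((0 * (ρ * S * v ^ 2) - 2 * K * W ^ 2 * (ρ * S * (2 * v))) / (ρ * S * v ^ 2) ^ 2) v :=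
      (hasDerivAt_const v (2 * K * W ^ 2)).div hden (by positivity)
    have hd1 : HasDerivAt (fun v : ℝ => (1/2) * Cd * ρ * S * v ^ 2)
        ((1/2) * Cd * ρ * S * (2 * v)) v := by
      simpa using (hasDerivAt_pow 2 v).const_mul ((1/2) * Cd * ρ * S)
    refine (hd1.add hd2).congr_deriv ?_
    field_simp
    ring
  -- strict monotonicity of the power P(v) = D v * v above vmp
  have hPmono : StrictMonoOn (fun v => D v * v) (Set.Ici vmp) := by
    apply strictMonoOn_of_deriv_pos (convex_Ici vmp)
    · intro w hw
      have hw0 : 0 < w := lt_of_lt_of_le hvmp hw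
      exact ((hD' w hw0).mul (hasDerivAt_id w)).continuousAt.continuousWithinAt
    · intro w hw
      rw [interior_Ici] at hw
      have hw0 : 0 < w := hvmp.trans hw
      have hder : deriv (fun v => D v * v) w
          = (Cd * ρ * S * w - 4 * K * W ^ 2 / (ρ * S * w ^ 3)) * w + D w * 1 :=
        ((hD' w hw0).mul (hasDerivAt_id w)).deriv
      rw [hder]
      have h4 : vmp ^ (4:ℕ) < w ^ (4:ℕ) := pow_lt_pow_left₀ hw hvmp.le (by norm_num)
      rw [hv4, div_lt_iff₀ (by positivity)] at h4
      have hrw : (Cd * ρ * S * w - 4 * K * W ^ 2 / (ρ * S * w ^ 3)) * w + D w * 1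
          = (3 * Cd * ρ ^ 2 * S ^ 2 * w ^ 4 - 4 * K * W ^ 2) / (2 * ρ * S * w ^ 2) := by
        simp only [D]
        field_simp
        ring
      rw [hrw]
      apply div_pos _ (by positivity)
      nlinarith [h4]
  -- convexity of s
  have hconv : Convex ℝ s := by
    rw [convex_iff_ordConnected]
    refine ⟨fun x hx y hy z hz => ?_⟩
    obtain ⟨hx1, _⟩ := hx
    obtain ⟨hy1, hy2⟩ := hy
    obtain ⟨hz1, hz2⟩ := hz
    refine ⟨lt_of_lt_of_le hx1 hz1, ?_⟩
    have hPz : D z * z ≤ D y * y := by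
      rcases eq_or_lt_of_le hz2 with h | h
      · rw [h]
      · exact le_of_lt (hPmono (le_of_lt (lt_of_lt_of_le hx1 hz1)) hy1.le h)
    have h2 : 4 * r * D z * z ≤ 4 * r * D y * y := by nlinarith [hPz]
    have h3 : 4 * r * D z * z / (η * n) ≤ 4 * r * D y * y / (η * n) :=
      (div_le_div_iff_of_pos_right (by positivity)).mpr h2
    simp only [Δ] at hy2 ⊢
    linarith
  -- openness of s
  have hsopen : IsOpen s := by
    have hseq : s = Set.Ioi vmp ∩ Δ ⁻¹' Set.Ioi 0 := by
      ext w
      simp [s, Set.mem_setOf_eq, Set.mem_Ioi]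
    rw [hseq]
    apply ContinuousOn.isOpen_inter_preimage _ isOpen_Ioi isOpen_Ioi
    intro w hw
    have hw0 : 0 < w := hvmp.trans hw
    have hΔd : HasDerivAt Δ
        (-((4 * r * (Cd * ρ * S * w - 4 * K * W ^ 2 / (ρ * S * w ^ 3)) * w
          + 4 * r * D w * 1) / (η * n))) w :=
      ((((hD' w hw0).const_mul (4 * r)).mul (hasDerivAt_id w)).div_const (η * n)).const_sub
        (Eoc ^ 2)
    exact hΔd.continuousAt.continuousWithinAt
  -- the derivative of G on s is negative
  have hkey : ∀ v ∈ s, ∃ e, HasDerivAt G e v ∧ e < 0 := by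
    intro v hv
    obtain ⟨hv1, hΔv⟩ := hv
    have hv0 : 0 < v := hvmp.trans hv1
    have hvne : v ≠ 0 := ne_of_gt hv0
    have hx : 0 < Real.sqrt (Δ v) := Real.sqrt_pos.mpr hΔv
    have hxne : Real.sqrt (Δ v) ≠ 0 := ne_of_gt hx
    refine ⟨-(MH * g / (2 * F * η)) *
      ((3 * Cd * ρ * S * v ^ 2 + 4 * K * W ^ 2 / (ρ * S * v ^ 2)) / Real.sqrt (Δ v)
        + 4 * r / (η * n) * ((3/2) * Cd * ρ * S * v ^ 2 - 2 * K * W ^ 2 / (ρ * S * v ^ 2)) ^ 2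
          * v / (2 * Real.sqrt (Δ v) ^ 3)), ?_, ?_⟩
    · -- HasDerivAt G e v
      have hd := hD' v hv0
      have hΔd : HasDerivAt Δ
          (-((4 * r * (Cd * ρ * S * v - 4 * K * W ^ 2 / (ρ * S * v ^ 3)) * v
            + 4 * r * D v * 1) / (η * n))) v :=
        (((hd.const_mul (4 * r)).mul (hasDerivAt_id v)).div_const (η * n)).const_sub (Eoc ^ 2)
      have hsq := hΔd.sqrt (ne_of_gt hΔv)
      have ht1 := ((hsq.const_sub Eoc).const_mul n).div_const (2 * r)
      have hq1 : HasDerivAt (fun w : ℝ => Cd * ρ * S * w) (Cd * ρ * S * 1) v :=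
        (hasDerivAt_id v).const_mul (Cd * ρ * S)
      have hden3 := (hasDerivAt_pow 3 v).const_mul (ρ * S)
      have hq2 := (hasDerivAt_const v (4 * K * W ^ 2)).div hden3
        (show ρ * S * v ^ 3 ≠ 0 by positivity)
      have hq := (hq1.sub hq2).mul (hasDerivAt_pow 2 v)
      have hN := hq.add (hd.mul (hasDerivAt_id v))
      have hden2 := hsq.const_mul η
      have ht2 := hN.div hden2 (mul_ne_zero (ne_of_gt hη) hxne)
      have HG := (ht1.sub ht2).const_mul (MH * g / (2 * F))
      have hGeq : G =ᶠ[nhds v] (fun w => (MH * g / (2 * F)) *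
          (n * (Eoc - Real.sqrt (Δ w)) / (2 * r)
            - ((Cd * ρ * S * w - 4 * K * W ^ 2 / (ρ * S * w ^ 3)) * w ^ 2 + D w * w)
              / (η * Real.sqrt (Δ w)))) := by
        filter_upwards [isOpen_Ioi.mem_nhds (show v ∈ Set.Ioi 0 from hv0)] with w hw
        simp only [G]
        rw [(hD' w hw).deriv]
      have HG2 := HG.congr_of_eventuallyEq hGeq
      refine HG2.congr_deriv ?_
      simp only [D, id_eq, Nat.cast_ofNat, pow_one, Pi.mul_apply, Pi.sub_apply, Pi.add_apply, Pi.div_apply]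
      field_simp
      ring
    · -- e < 0
      rw [neg_mul, neg_lt_zero]
      apply mul_pos (by positivity)
      have hA : 0 < (3 * Cd * ρ * S * v ^ 2 + 4 * K * W ^ 2 / (ρ * S * v ^ 2))
          / Real.sqrt (Δ v) := div_pos (by positivity) hx
      have hB : 0 ≤ 4 * r / (η * n)
          * ((3/2) * Cd * ρ * S * v ^ 2 - 2 * K * W ^ 2 / (ρ * S * v ^ 2)) ^ 2
          * v / (2 * Real.sqrt (Δ v) ^ 3) := by
        apply div_nonneg _ (by positivity)
        have := sq_nonneg ((3/2) * Cd * ρ * S * v ^ 2 - 2 * K * W ^ 2 / (ρ * S * v ^ 2))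
        positivity
      linarith
  -- continuity of G on s
  have hcont : ContinuousOn G s := fun v hv =>
    ((hkey v hv).choose_spec.1).continuousAt.continuousWithinAt
  have hanti : StrictAntiOn G s := by
    apply strictAntiOn_of_deriv_neg hconv hcont
    intro x hx
    rw [hsopen.interior_eq] at hx
    obtain ⟨e, he, hneg⟩ := hkey x hx
    rw [he.deriv]
    exact hneg
  exact ⟨hanti, fun v₁ h₁ v₂ h₂ e₁ e₂ => hanti.injOn h₁ h₂ (by rw [e₁, e₂])⟩
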